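/- If two distinct n-bit integers w₁ ≠ w₂ are encoded by Encode_W-to-SIP, the resulting self-inverting permutations π*₁ and π*₂ are distinct. -/

import Mathlib

/-!
The first `n` letters of `B*` are `1` and the last one is `0`, so `σ` ends with `n, n-1, …, 1`
and `π*` sends `j ∈ [1, n]` to `σ_j`. The zeros of `B*` open `σ` in increasing order and end with
`2n+1`, preceded by at most `n` others, namely the positions encoding the set bits of `w`. Hence
`π*(1), …, π*(n)`, read up to the first `2n+1`, recovers `w`.
-/

/-- Value (as Bool, true = 1) of the bit sequence B* = flip(B') at position i ∈ {1,...,2n+1},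
where B' = 0^n ‖ (n-bit binary representation of w, MSB first) ‖ 1. -/
def bstar (n w i : ℕ) : Bool :=
  decide (i ≤ n) || (decide (i ≠ 2 * n + 1) && !(w.testBit (2 * n - i)))

/-- Positions (from 1 to 2n+1) of the 0s of B*, in increasing order. -/
def zerosPos (n w : ℕ) : List ℕ :=
  ((List.range (2 * n + 1)).map (· + 1)).filter fun i => !bstar n w i

/-- Positions (from 1 to 2n+1) of the 1s of B*, in increasing order. -/
def onesPos (n w : ℕ) : List ℕ :=
  ((List.range (2 * n + 1)).map (· + 1)).filter fun i => bstar n w i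

/-- The bitonic sequence σ = X ‖ reverse(Y) of Encode_W-to-SIP. -/
def sigmaList (n w : ℕ) : List ℕ :=
  zerosPos n w ++ (onesPos n w).reverse

/-- The self-inverting permutation π* of Encode_W-to-SIP, as the function pairing
σ_i with σ_{2n+2-i} (1-indexed), i.e., index i with index 2n-i (0-indexed),
fixing the middle element. -/
def encodeSIP (n w : ℕ) : ℕ → ℕ := fun x =>
  (sigmaList n w).getD (2 * n - (sigmaList n w).idxOf x) 0

theorem List.takeWhile_take_append_cons {α : Type*} [DecidableEq α] {l r : List α} {a : α}
    {n : ℕ} (ha : a ∉ l) (hn : l.length ≤ n) :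
    ((l ++ a :: r).take n).takeWhile (· ≠ a) = l := by
  have hl : ∀ b ∈ l, decide (b ≠ a) = true := fun b hb => by
    simpa using fun h : b = a => ha (h ▸ hb)
  rw [List.take_append, List.take_of_length_le hn, List.takeWhile_append_of_pos hl]
  obtain hk | hk := Nat.eq_zero_or_pos (n - l.length)
  · rw [hk, List.take_zero, List.takeWhile_nil, List.append_nil]
  · rw [List.take_cons hk, List.takeWhile_cons_of_neg (by simp), List.append_nil]

theorem List.idxOf_reverse_range'_one {n j : ℕ} (h₁ : 1 ≤ j) (h₂ : j ≤ n) :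
    (List.range' 1 n).reverse.idxOf j = n - j := by
  have hlen : n - j < (List.range' 1 n).reverse.length := by simp; omega
  have hget : (List.range' 1 n).reverse[n - j] = j := by
    simp only [List.getElem_reverse, List.getElem_range', List.length_range']
    omega
  simpa only [hget] using
    (List.nodup_reverse.2 (List.nodup_range' 1 (by omega))).idxOf_getElem (n - j) hlen

/-- Positions `i ∈ (n, 2n]` at which `B*` carries a `0`, i.e. bit `2n - i` of `w` is set. -/
def setBitPositions (n w : ℕ) : List ℕ :=
  (List.range' (n + 1) n).filter fun i => w.testBit (2 * n - i)

def clearBitPositions (n w : ℕ) : List ℕ :=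
  (List.range' (n + 1) n).filter fun i => !w.testBit (2 * n - i)

theorem map_succ_range_two_mul_add_one (n : ℕ) :
    (List.range (2 * n + 1)).map (· + 1) =
      List.range' 1 n ++ List.range' (n + 1) n ++ [2 * n + 1] := by
  calc (List.range (2 * n + 1)).map (· + 1) = List.range' 1 (n + n + 1) := by
        simp [List.range'_eq_map_range, two_mul, Nat.add_comm]
    _ = _ := by
        rw [List.range'_concat, ← List.range'_append]
        simp [two_mul, Nat.add_comm]

theorem bstar_of_le {n w i : ℕ} (hi : i ≤ n) : bstar n w i = true := by
  simp [bstar, hi]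

theorem bstar_of_mem_range' {n w i : ℕ} (hi : i ∈ List.range' (n + 1) n) :
    bstar n w i = !w.testBit (2 * n - i) := by
  rw [List.mem_range'_1] at hi
  simp [bstar, show ¬ i ≤ n by omega, show i ≠ 2 * n + 1 by omega]

theorem bstar_two_mul_add_one (n w : ℕ) : bstar n w (2 * n + 1) = false := by
  simp [bstar, two_mul]

theorem zerosPos_eq (n w : ℕ) : zerosPos n w = setBitPositions n w ++ [2 * n + 1] := by
  rw [zerosPos, map_succ_range_two_mul_add_one, List.filter_append, List.filter_append,
    List.filter_eq_nil_iff.2 fun i hi => ?_, List.nil_append, setBitPositions]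
  · congr 1
    · exact List.filter_congr fun i hi => by simp [bstar_of_mem_range' hi]
    · simp [bstar_two_mul_add_one]
  · have := List.mem_range'_1.1 hi
    simp [bstar_of_le (show i ≤ n by omega)]

theorem onesPos_eq (n w : ℕ) : onesPos n w = List.range' 1 n ++ clearBitPositions n w := by
  rw [onesPos, map_succ_range_two_mul_add_one, List.filter_append, List.filter_append,
    List.filter_eq_self.2 fun i hi => ?_, List.append_assoc, clearBitPositions,
    List.filter_cons_of_neg (by simp [bstar_two_mul_add_one]), List.filter_nil, List.append_nil]
  · exact congrArg _ (List.filter_congr fun i hi => by simp [bstar_of_mem_range' hi])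
  · have := List.mem_range'_1.1 hi
    exact bstar_of_le (by omega)

theorem length_setBitPositions_add_length_clearBitPositions (n w : ℕ) :
    (setBitPositions n w).length + (clearBitPositions n w).length = n := by
  rw [setBitPositions, clearBitPositions, ← List.length_eq_length_filter_add, List.length_range']

theorem sigmaList_eq (n w : ℕ) :
    sigmaList n w = setBitPositions n w ++ (2 * n + 1) ::
      ((clearBitPositions n w).reverse ++ (List.range' 1 n).reverse) := by
  simp [sigmaList, zerosPos_eq, onesPos_eq]

theorem idxOf_sigmaList {n w j : ℕ} (h₁ : 1 ≤ j) (h₂ : j ≤ n) :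
    (sigmaList n w).idxOf j = 2 * n + 1 - j := by
  have hj : j ∉ setBitPositions n w ++ (2 * n + 1) :: (clearBitPositions n w).reverse := by
    simp only [setBitPositions, clearBitPositions, List.mem_append, List.mem_cons,
      List.mem_reverse, List.mem_filter, List.mem_range'_1]
    omega
  rw [sigmaList_eq, ← List.cons_append, ← List.append_assoc, List.idxOf_append_of_notMem hj,
    List.idxOf_reverse_range'_one h₁ h₂]
  simp only [List.length_append, List.length_cons, List.length_reverse]
  have := length_setBitPositions_add_length_clearBitPositions n w
  omega

theorem length_sigmaList (n w : ℕ) : (sigmaList n w).length = 2 * n + 1 := by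
  have := length_setBitPositions_add_length_clearBitPositions n w
  simp only [sigmaList_eq, List.length_append, List.length_cons, List.length_reverse,
    List.length_range']
  omega

theorem encodeSIP_of_le {n w j : ℕ} (h₁ : 1 ≤ j) (h₂ : j ≤ n) :
    encodeSIP n w j = (sigmaList n w).getD (j - 1) 0 := by
  rw [encodeSIP, idxOf_sigmaList h₁ h₂]
  congr 1
  omega

theorem map_encodeSIP_range' (n w : ℕ) :
    (List.range' 1 n).map (encodeSIP n w) = (sigmaList n w).take n := by
  have hlen := length_sigmaList n w
  refine List.ext_getElem (by simp [hlen]; omega) fun t ht _ => ?_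
  simp only [List.length_map, List.length_range'] at ht
  rw [List.getElem_map, List.getElem_range', encodeSIP_of_le (by omega) (by omega),
    List.getElem_take, List.getD_eq_getElem _ _ (by omega)]
  simp

theorem takeWhile_map_encodeSIP_range' (n w : ℕ) :
    ((List.range' 1 n).map (encodeSIP n w)).takeWhile (· ≠ 2 * n + 1) = setBitPositions n w := by
  rw [map_encodeSIP_range', sigmaList_eq]
  refine List.takeWhile_take_append_cons (fun h => ?_) ?_
  · simp only [setBitPositions, List.mem_filter, List.mem_range'_1] at h
    omega
  · exact (List.length_filter_le _ _).trans_eq List.length_range'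

theorem mem_setBitPositions {n w k : ℕ} (hk : k < n) :
    2 * n - k ∈ setBitPositions n w ↔ w.testBit k := by
  simp only [setBitPositions, List.mem_filter, List.mem_range'_1,
    show 2 * n - (2 * n - k) = k by omega]
  constructor
  · exact fun h => h.2
  · exact fun h => ⟨by omega, h⟩

theorem eq_of_setBitPositions_eq {n w₁ w₂ : ℕ} (hw₁ : w₁ < 2 ^ n) (hw₂ : w₂ < 2 ^ n)
    (h : setBitPositions n w₁ = setBitPositions n w₂) : w₁ = w₂ := by
  refine Nat.eq_of_testBit_eq fun k => ?_
  obtain hk | hk := lt_or_ge k n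
  · exact Bool.eq_iff_iff.2 ((mem_setBitPositions hk).symm.trans (h ▸ mem_setBitPositions hk))
  · have hpow := Nat.pow_le_pow_right two_pos hk
    rw [Nat.testBit_lt_two_pow (hw₁.trans_le hpow), Nat.testBit_lt_two_pow (hw₂.trans_le hpow)]

/-- If two distinct n-bit integers are encoded by Encode_W-to-SIP, the resulting
self-inverting permutations are distinct. -/
theorem stmt_16 (n w₁ w₂ : ℕ) (hw₁ : w₁ < 2 ^ n) (hw₂ : w₂ < 2 ^ n)
    (h : w₁ ≠ w₂) : encodeSIP n w₁ ≠ encodeSIP n w₂ := by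
  intro heq
  refine h (eq_of_setBitPositions_eq hw₁ hw₂ ?_)
  rw [← takeWhile_map_encodeSIP_range', heq, takeWhile_map_encodeSIP_range']
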